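/- Let S₁, S₂ ~ Exp(μ) and τ ~ Exp((2r-1)μ) be independent, with μ > 0 and integer r ≥ 2. Then E[max(S₁, S₂+τ)] − (E[S₁] + E[S₂+τ])/2 = ((2r-1)/(2r-2))·(1/(2μ)) − 1/((2r-2)(2r-1)·2rμ) − 1/(2(2r-1)μ). -/

import Mathlib

/-!
Integrate out `τ`, then `S₂`, then `S₁`. Given `S₁ = s₁` and `S₂ = s₂`, memorylessness of `τ`
gives `E[max(s₁, s₂ + τ)] = max(s₁, s₂) + e^{-λ (s₁ - s₂)⁺} / λ` with `λ = (2r-1)μ`. Averaging over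
`S₂` (a convolution of `e^{-λ ·}` with the `Exp(μ)` density) leaves `s₁` plus a combination of
`e^{-μ s₁}` and `e^{-λ s₁}`, whose mean under `Exp(μ)` is elementary.
-/

open Real MeasureTheory Set Filter Topology

theorem Continuous.integrableOn_Ioi_of_le {E : Type*} [NormedAddCommGroup E] {f : ℝ → E}
    (hf : Continuous f) {a b : ℝ} (hab : a ≤ b) (hb : IntegrableOn f (Ioi b)) :
    IntegrableOn f (Ioi a) :=
  Ioc_union_Ioi_eq_Ioi hab ▸ hf.integrableOn_Ioc.union hb

theorem integral_exp_neg_mul_Ioi {b : ℝ} (hb : 0 < b) (a : ℝ) :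
    ∫ x in Ioi a, exp (-b * x) = exp (-b * a) / b := by
  rw [integral_exp_mul_Ioi (neg_lt_zero.2 hb), div_neg, neg_div, neg_neg]

theorem integral_exp_mul {a : ℝ} (ha : a ≠ 0) (u v : ℝ) :
    ∫ x in u..v, exp (a * x) = (exp (a * v) - exp (a * u)) / a := by
  rw [intervalIntegral.integral_comp_mul_left (fun x => exp x) ha, integral_exp, smul_eq_mul,
    inv_mul_eq_div]

section
variable {b : ℝ}

theorem hasDerivAt_mul_exp_neg_mul_primitive (hb : b ≠ 0) (x : ℝ) :
    HasDerivAt (fun x => -(x / b + 1 / b ^ 2) * exp (-b * x)) (x * exp (-b * x)) x := by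
  have hexp : HasDerivAt (fun x => exp (-b * x)) (exp (-b * x) * -b) x :=
    ((hasDerivAt_id x).const_mul (-b)).exp.congr_deriv (by simp)
  have hpoly : HasDerivAt (fun x => -(x / b + 1 / b ^ 2)) (-(1 / b)) x :=
    (((hasDerivAt_id' x).div_const b).add_const _).neg
  refine (hpoly.mul hexp).congr_deriv ?_
  field_simp
  ring

theorem tendsto_mul_exp_neg_mul_primitive (hb : 0 < b) :
    Tendsto (fun x => -(x / b + 1 / b ^ 2) * exp (-b * x)) atTop (𝓝 0) := by
  have hlin : Tendsto (fun x => b * x) atTop atTop := tendsto_id.const_mul_atTop hb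
  have h1 := ((tendsto_pow_mul_exp_neg_atTop_nhds_zero 1).comp hlin).const_mul (1 / b ^ 2)
  have h2 := (tendsto_exp_neg_atTop_nhds_zero.comp hlin).const_mul (1 / b ^ 2)
  have h := (h1.add h2).neg
  rw [mul_zero, add_zero, neg_zero] at h
  refine h.congr fun x => ?_
  simp only [Function.comp_apply, pow_one, neg_mul]
  field_simp

theorem integrableOn_mul_exp_neg_mul_Ioi (hb : 0 < b) {a : ℝ} (ha : 0 ≤ a) :
    IntegrableOn (fun x => x * exp (-b * x)) (Ioi a) :=
  integrableOn_Ioi_deriv_of_nonneg' (fun x _ => hasDerivAt_mul_exp_neg_mul_primitive hb.ne' x)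
    (fun _ hx => mul_nonneg (ha.trans hx.le) (exp_pos _).le) (tendsto_mul_exp_neg_mul_primitive hb)

theorem integral_mul_exp_neg_mul_Ioi (hb : 0 < b) {a : ℝ} (ha : 0 ≤ a) :
    ∫ x in Ioi a, x * exp (-b * x) = (a / b + 1 / b ^ 2) * exp (-b * a) := by
  rw [integral_Ioi_of_hasDerivAt_of_nonneg'
    (fun x _ => hasDerivAt_mul_exp_neg_mul_primitive hb.ne' x)
    (fun x hx => mul_nonneg (ha.trans hx.le) (exp_pos _).le) (tendsto_mul_exp_neg_mul_primitive hb)]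
  ring

theorem integral_exp_density (hb : 0 < b) : ∫ x in Ioi 0, b * exp (-b * x) = 1 := by
  rw [integral_const_mul, integral_exp_neg_mul_Ioi hb, mul_zero, exp_zero,
    mul_one_div_cancel hb.ne']

theorem integral_mul_exp_density (hb : 0 < b) :
    ∫ x in Ioi 0, x * (b * exp (-b * x)) = 1 / b := by
  simp_rw [mul_left_comm _ b]
  rw [integral_const_mul, integral_mul_exp_neg_mul_Ioi hb le_rfl, mul_zero, exp_zero, zero_div,
    zero_add]
  field_simp

theorem integrableOn_mul_exp_density (hb : 0 < b) :
    IntegrableOn (fun x => x * (b * exp (-b * x))) (Ioi 0) := by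
  simp_rw [mul_left_comm _ b]
  exact (integrableOn_mul_exp_neg_mul_Ioi hb le_rfl).const_mul b

theorem integrableOn_max_mul_exp_density (hb : 0 < b) {c : ℝ} (hc : 0 ≤ c) :
    IntegrableOn (fun x => max c x * (b * exp (-b * x))) (Ioi 0) := by
  refine Continuous.integrableOn_Ioi_of_le (by fun_prop) hc <|
    IntegrableOn.congr_fun ((integrableOn_mul_exp_neg_mul_Ioi hb hc).const_mul b) (fun x hx => ?_)
      measurableSet_Ioi
  rw [max_eq_right (le_of_lt hx)]
  ring

theorem integral_max_mul_exp_density (hb : 0 < b) {c : ℝ} (hc : 0 ≤ c) :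
    ∫ x in Ioi 0, max c x * (b * exp (-b * x)) = c + exp (-b * c) / b := by
  have hIcc : EqOn (fun x => max c x * (b * exp (-b * x))) (fun x => c * b * exp (-b * x))
      (uIcc 0 c) := fun x hx => by
    rw [uIcc_of_le hc] at hx
    dsimp only
    rw [max_eq_left hx.2]
    ring
  have hIoi : EqOn (fun x => max c x * (b * exp (-b * x))) (fun x => b * (x * exp (-b * x)))
      (Ioi c) := fun x hx => by
    dsimp only
    rw [max_eq_right (le_of_lt hx)]
    ring
  rw [← intervalIntegral.integral_interval_add_Ioi'
      (Continuous.intervalIntegrable (by fun_prop) _ _)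
      ((integrableOn_max_mul_exp_density hb hc).mono_set (Ioi_subset_Ioi hc)),
    intervalIntegral.integral_congr hIcc, setIntegral_congr_fun measurableSet_Ioi hIoi,
    intervalIntegral.integral_const_mul, integral_const_mul,
    integral_exp_mul (neg_ne_zero.2 hb.ne'),
    integral_mul_exp_neg_mul_Ioi hb hc, mul_zero, exp_zero]
  field_simp
  ring

end

section
variable {l m t : ℝ}

theorem integrableOn_exp_neg_mul_max_sub_mul_exp_density (hm : 0 < m) (ht : 0 ≤ t) :
    IntegrableOn (fun s => exp (-l * max (t - s) 0) * (m * exp (-m * s))) (Ioi 0) := by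
  refine Continuous.integrableOn_Ioi_of_le (by fun_prop) ht <|
    IntegrableOn.congr_fun ((exp_neg_integrableOn_Ioi t hm).const_mul m) (fun s hs => ?_)
      measurableSet_Ioi
  rw [max_eq_right (sub_nonpos.2 (le_of_lt hs)), mul_zero, exp_zero, one_mul]

theorem integral_exp_neg_mul_max_sub_mul_exp_density (hm : 0 < m) (hml : m ≠ l) (ht : 0 ≤ t) :
    ∫ s in Ioi 0, exp (-l * max (t - s) 0) * (m * exp (-m * s))
      = m * (exp (-m * t) - exp (-l * t)) / (l - m) + exp (-m * t) := by
  have hIcc : EqOn (fun s => exp (-l * max (t - s) 0) * (m * exp (-m * s)))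
      (fun s => m * exp (-l * t) * exp ((l - m) * s)) (uIcc 0 t) := fun s hs => by
    rw [uIcc_of_le ht] at hs
    dsimp only
    rw [max_eq_left (sub_nonneg.2 hs.2), mul_left_comm, ← exp_add, mul_assoc, ← exp_add]
    ring_nf
  have hIoi : EqOn (fun s => exp (-l * max (t - s) 0) * (m * exp (-m * s)))
      (fun s => m * exp (-m * s)) (Ioi t) := fun s hs => by
    dsimp only
    rw [max_eq_right (sub_nonpos.2 (le_of_lt hs)), mul_zero, exp_zero, one_mul]
  have hlm : l - m ≠ 0 := sub_ne_zero.2 hml.symm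
  have hexp : exp (-l * t) * exp ((l - m) * t) = exp (-m * t) := by
    rw [← exp_add]
    ring_nf
  rw [← intervalIntegral.integral_interval_add_Ioi'
      (Continuous.intervalIntegrable (by fun_prop) _ _)
      ((integrableOn_exp_neg_mul_max_sub_mul_exp_density hm ht).mono_set (Ioi_subset_Ioi ht)),
    intervalIntegral.integral_congr hIcc, setIntegral_congr_fun measurableSet_Ioi hIoi,
    intervalIntegral.integral_const_mul, integral_const_mul, integral_exp_mul hlm,
    integral_exp_neg_mul_Ioi hm, mul_zero, exp_zero, mul_div_assoc', mul_sub, mul_assoc m, hexp]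
  field_simp

end

theorem max_add_eq_add_max_max_sub {s₁ s₂ τ : ℝ} (hτ : 0 ≤ τ) :
    max s₁ (s₂ + τ) = s₂ + max (max (s₁ - s₂) 0) τ := by
  rcases le_total s₁ s₂ with h | h
  · rw [max_eq_right (sub_nonpos.2 h), max_eq_right hτ, max_eq_right (by linarith)]
  · rw [max_eq_left (sub_nonneg.2 h), ← max_add_add_left]
    ring_nf

theorem integral_max_add_mul_exp_density {b : ℝ} (hb : 0 < b) (s₁ s₂ : ℝ) :
    ∫ τ in Ioi 0, max s₁ (s₂ + τ) * (b * exp (-b * τ))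
      = max s₁ s₂ + exp (-b * max (s₁ - s₂) 0) / b := by
  have hc : 0 ≤ max (s₁ - s₂) 0 := le_max_right _ _
  have hsplit : EqOn (fun τ => max s₁ (s₂ + τ) * (b * exp (-b * τ)))
      (fun τ => s₂ * (b * exp (-b * τ)) + max (max (s₁ - s₂) 0) τ * (b * exp (-b * τ)))
      (Ioi 0) := fun τ hτ => by
    dsimp only
    rw [max_add_eq_add_max_max_sub (le_of_lt hτ), add_mul]
  rw [setIntegral_congr_fun measurableSet_Ioi hsplit,
    integral_add (((exp_neg_integrableOn_Ioi 0 hb).const_mul b).const_mul s₂)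
      (integrableOn_max_mul_exp_density hb hc),
    integral_const_mul, integral_exp_density hb, integral_max_mul_exp_density hb hc,
    mul_one, ← add_assoc, ← max_add_add_left, add_sub_cancel, add_zero]

theorem integral_max_add_exp_mul_exp_density {l m t : ℝ} (hm : 0 < m) (hml : m ≠ l)
    (ht : 0 ≤ t) :
    ∫ s in Ioi 0, (max t s + exp (-l * max (t - s) 0) / l) * (m * exp (-m * s))
      = t + exp (-m * t) / m
        + (m * (exp (-m * t) - exp (-l * t)) / (l - m) + exp (-m * t)) / l := by
  simp_rw [add_mul, div_mul_eq_mul_div]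
  rw [integral_add (integrableOn_max_mul_exp_density hm ht)
      ((integrableOn_exp_neg_mul_max_sub_mul_exp_density hm ht).div_const l),
    integral_div, integral_max_mul_exp_density hm ht,
    integral_exp_neg_mul_max_sub_mul_exp_density hm hml ht]

theorem integral_exp_density_mul_add_exp {b c : ℝ} (hb : 0 < b) (hbc : 0 < b + c) (A B : ℝ) :
    ∫ t in Ioi 0, b * exp (-b * t) * (t + A * exp (-b * t) + B * exp (-c * t))
      = 1 / b + A / 2 + B * b / (b + c) := by
  have hexp : ∀ d t : ℝ, exp (-b * t) * exp (-d * t) = exp (-(b + d) * t) := fun d t => by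
    rw [← exp_add]
    ring_nf
  have hsplit : ∀ t : ℝ, b * exp (-b * t) * (t + A * exp (-b * t) + B * exp (-c * t))
      = t * (b * exp (-b * t)) + A * b * exp (-(b + b) * t) + B * b * exp (-(b + c) * t) :=
    fun t => by rw [← hexp, ← hexp]; ring
  simp_rw [hsplit]
  have hbb : 0 < b + b := by linarith
  have hI₁ := integrableOn_mul_exp_density hb
  have hI₂ := (exp_neg_integrableOn_Ioi 0 hbb).const_mul (A * b)
  have hI₃ := (exp_neg_integrableOn_Ioi 0 hbc).const_mul (B * b)
  rw [integral_add ?_ hI₃, integral_add hI₁ hI₂, integral_mul_exp_density hb, integral_const_mul,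
    integral_const_mul, integral_exp_neg_mul_Ioi hbb, integral_exp_neg_mul_Ioi hbc]
  · simp only [mul_zero, exp_zero]
    field_simp
    ring
  · exact hI₁.add hI₂

theorem integral_max_add_mul_exp_densities {l m : ℝ} (hl : 0 < l) (hm : 0 < m) (hml : m ≠ l) :
    ∫ s₁ in Ioi 0, ∫ s₂ in Ioi 0, ∫ τ in Ioi 0,
        max s₁ (s₂ + τ) * (m * exp (-m * s₁)) * (m * exp (-m * s₂)) * (l * exp (-l * τ))
      = 1 / m + 1 / (2 * m) + m / (2 * l * (l + m)) + 1 / (2 * l) := by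
  have hlm : l - m ≠ 0 := sub_ne_zero.2 hml.symm
  have inner : ∀ s₁ s₂ : ℝ, ∫ τ in Ioi 0,
        max s₁ (s₂ + τ) * (m * exp (-m * s₁)) * (m * exp (-m * s₂)) * (l * exp (-l * τ))
      = m * exp (-m * s₁)
        * ((max s₁ s₂ + exp (-l * max (s₁ - s₂) 0) / l) * (m * exp (-m * s₂))) := fun s₁ s₂ => by
    have hsplit : ∀ τ : ℝ,
        max s₁ (s₂ + τ) * (m * exp (-m * s₁)) * (m * exp (-m * s₂)) * (l * exp (-l * τ))
          = m * exp (-m * s₁) * (m * exp (-m * s₂)) * (max s₁ (s₂ + τ) * (l * exp (-l * τ))) :=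
      fun τ => by ring
    simp_rw [hsplit]
    rw [integral_const_mul, integral_max_add_mul_exp_density hl]
    ring
  have middle : ∀ s₁ ∈ Ioi (0 : ℝ), ∫ s₂ in Ioi 0, m * exp (-m * s₁)
        * ((max s₁ s₂ + exp (-l * max (s₁ - s₂) 0) / l) * (m * exp (-m * s₂)))
      = m * exp (-m * s₁) * (s₁ + (1 / m + 1 / (l - m)) * exp (-m * s₁)
          + -(m / (l * (l - m))) * exp (-l * s₁)) := fun s₁ hs₁ => by
    rw [integral_const_mul, integral_max_add_exp_mul_exp_density hm hml (le_of_lt hs₁)]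
    field_simp
    ring
  simp_rw [inner]
  rw [setIntegral_congr_fun measurableSet_Ioi middle,
    integral_exp_density_mul_add_exp hm (by linarith)]
  field_simp
  ring

theorem integral_add_mul_exp_densities {l m : ℝ} (hl : 0 < l) (hm : 0 < m) :
    ∫ s in Ioi 0, ∫ τ in Ioi 0, (s + τ) * (m * exp (-m * s)) * (l * exp (-l * τ))
      = 1 / m + 1 / l := by
  have inner : ∀ s : ℝ, ∫ τ in Ioi 0, (s + τ) * (m * exp (-m * s)) * (l * exp (-l * τ))
      = s * (m * exp (-m * s)) + 1 / l * (m * exp (-m * s)) := fun s => by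
    have hsplit : ∀ τ : ℝ, (s + τ) * (m * exp (-m * s)) * (l * exp (-l * τ))
        = m * exp (-m * s) * (s * (l * exp (-l * τ)) + τ * (l * exp (-l * τ))) := fun τ => by ring
    simp_rw [hsplit]
    rw [integral_const_mul, integral_add (((exp_neg_integrableOn_Ioi 0 hl).const_mul l).const_mul s)
        (integrableOn_mul_exp_density hl), integral_const_mul, integral_exp_density hl,
      integral_mul_exp_density hl]
    ring
  simp_rw [inner]
  rw [integral_add (integrableOn_mul_exp_density hm)
      (((exp_neg_integrableOn_Ioi 0 hm).const_mul m).const_mul (1 / l)), integral_const_mul,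
    integral_exp_density hm, integral_mul_exp_density hm, mul_one]

/-- Difference between average request delay and average packet delay under BoS:
    E[max(S₁, S₂+τ)] − (E[S₁] + E[S₂+τ])/2. -/
theorem request_minus_packet_delay (r : ℕ) (hr : 2 ≤ r) (μ : ℝ) (hμ : 0 < μ) :
    (∫ s₁ in Ioi (0 : ℝ), ∫ s₂ in Ioi (0 : ℝ), ∫ τ in Ioi (0 : ℝ),
        max s₁ (s₂ + τ) * (μ * exp (-μ * s₁)) * (μ * exp (-μ * s₂)) *
          ((2 * r - 1) * μ * exp (-((2 * r - 1) * μ) * τ)))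
      - ((∫ s₁ in Ioi (0 : ℝ), s₁ * (μ * exp (-μ * s₁)))
          + (∫ s₂ in Ioi (0 : ℝ), ∫ τ in Ioi (0 : ℝ),
              (s₂ + τ) * (μ * exp (-μ * s₂)) *
                ((2 * r - 1) * μ * exp (-((2 * r - 1) * μ) * τ)))) / 2 =
      (2 * (r : ℝ) - 1) / (2 * r - 2) * (1 / (2 * μ))
        - 1 / ((2 * (r : ℝ) - 2) * (2 * r - 1) * (2 * r) * μ)
        - 1 / (2 * (2 * (r : ℝ) - 1) * μ) := by
  have hr' : (2 : ℝ) ≤ r := by exact_mod_cast hr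
  have hl : 0 < (2 * (r : ℝ) - 1) * μ := mul_pos (by linarith) hμ
  have hμl : μ ≠ (2 * (r : ℝ) - 1) * μ := fun h => by nlinarith
  rw [integral_max_add_mul_exp_densities hl hμ hμl, integral_mul_exp_density hμ,
    integral_add_mul_exp_densities hl hμ]
  have h₁ : 2 * (r : ℝ) - 1 ≠ 0 := by linarith
  have h₂ : (r : ℝ) - 1 ≠ 0 := by linarith
  have h₃ : (r : ℝ) ≠ 0 := by linarith
  field_simp
  ring
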